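/- Let p, q, s be distinct propositional variables, φ = ◇◇p ∧ ¬◇p ∧ ¬◇◇◇p and ψ = (◇◇s ∧ ¬◇s) → ¬(◇(q ∧ ◇s) ∧ ◇(¬q ∧ ◇s)). Then there is no formula ι with sig(ι) = ∅ (containing no propositional variables) such that both φ → ι and ι → ψ are true at every point of every model based on a difference frame (W, ≠). -/

import Mathlib

/-- Modal formulas built from propositional variables (indexed by ℕ),
constants ⊤, ⊥, negation, conjunction and the modal operator ◇. -/
inductive MF : Type where
  | var : ℕ → MF
  | top : MF
  | bot : MF
  | neg : MF → MF
  | and : MF → MF → MF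
  | dia : MF → MF
deriving DecidableEq

namespace MF

/-- Disjunction, as an abbreviation. -/
def or (a b : MF) : MF := neg (and (neg a) (neg b))

/-- Implication, as an abbreviation. -/
def imp (a b : MF) : MF := MF.or (neg a) b

/-- Box, as an abbreviation: □φ := ¬◇¬φ. -/
def box (a : MF) : MF := neg (dia (neg a))

/-- The (finite) set of propositional variables occurring in a formula. -/
def sig : MF → Finset ℕ
  | var n => {n}
  | top => ∅
  | bot => ∅
  | neg a => a.sig
  | and a b => a.sig ∪ b.sig
  | dia a => a.sig

/-- The set of subformulas of a formula. -/
def subf : MF → Finset MF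
  | var n => {var n}
  | top => {top}
  | bot => {bot}
  | neg a => insert (neg a) (subf a)
  | and a b => insert (and a b) (subf a ∪ subf b)
  | dia a => insert (dia a) (subf a)

/-- The number of subformulas of a formula. -/
def nsub (a : MF) : ℕ := (subf a).card

end MF

/-- A Kripke model: a binary (accessibility) relation on worlds together with
a valuation assigning to each propositional variable a set of worlds. -/
structure KModel (W : Type) where
  R : W → W → Prop
  val : ℕ → W → Prop

/-- Weak transitivity: xRy and yRz imply x = z or xRz. -/
def WTrans {W : Type} (R : W → W → Prop) : Prop :=
  ∀ x y z : W, R x y → R y z → x = z ∨ R x z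

/-- The usual Kripke truth relation. -/
def Sat {W : Type} (M : KModel W) : W → MF → Prop
  | x, .var n => M.val n x
  | _, .top => True
  | _, .bot => False
  | x, .neg a => ¬ Sat M x a
  | x, .and a b => Sat M x a ∧ Sat M x b
  | x, .dia a => ∃ y, M.R x y ∧ Sat M y a

/-- wK4-validity: truth at every point of every model based on a weakly
transitive frame. -/
def WK4Valid (φ : MF) : Prop :=
  ∀ (W : Type) (M : KModel W), WTrans M.R → ∀ x : W, Sat M x φ

/-- The cluster of a point x: C(x) = {x} ∪ {y | xRy and yRx}. -/
def cluster {W : Type} (R : W → W → Prop) (x : W) : Set W :=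
  {x} ∪ {y | R x y ∧ R y x}

/-- C R C' for sets of points: xRy for some x ∈ C, y ∈ C'. -/
def clusterRel {W : Type} (R : W → W → Prop) (C C' : Set W) : Prop :=
  ∃ x ∈ C, ∃ y ∈ C', R x y

/-- C R y for a set C and point y: xRy for some x ∈ C. -/
def clusterRelPt {W : Type} (R : W → W → Prop) (C : Set W) (y : W) : Prop :=
  ∃ x ∈ C, R x y

/-- C R^s C': C R C' and C ≠ C'. -/
def clusterRelS {W : Type} (R : W → W → Prop) (C C' : Set W) : Prop :=
  clusterRel R C C' ∧ C ≠ C'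

/-- A set is a cluster if it is the cluster of some point. -/
def IsCluster {W : Type} (R : W → W → Prop) (C : Set W) : Prop :=
  ∃ x : W, C = cluster R x

/-- A σ-model is descriptive if it satisfies (dif), (ref) and (com). -/
def Descriptive {W : Type} (σ : Finset ℕ) (M : KModel W) : Prop :=
  (∀ x y : W, (∀ φ : MF, φ.sig ⊆ σ → (Sat M x φ ↔ Sat M y φ)) → x = y) ∧
  (∀ x y : W, M.R x y ↔ ∀ χ : MF, χ.sig ⊆ σ → Sat M y χ → Sat M x (MF.dia χ)) ∧
  (∀ Γ : Set MF, (∀ φ ∈ Γ, φ.sig ⊆ σ) →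
    (∀ Γ' : Finset MF, ↑Γ' ⊆ Γ → ∃ x : W, ∀ φ ∈ Γ', Sat M x φ) →
    ∃ x : W, ∀ φ ∈ Γ, Sat M x φ)

/-- The ρ-type of a point: the set of all ρ-formulas true at it. -/
def rType {W : Type} (M : KModel W) (ρ : Finset ℕ) (x : W) : Set MF :=
  {φ : MF | φ.sig ⊆ ρ ∧ Sat M x φ}

/-- A cluster C is ρ-maximal if whenever C R y and some x ∈ C has the same
ρ-type as y, then y ∈ C. -/
def RhoMaximal {W : Type} (M : KModel W) (ρ : Finset ℕ) (C : Set W) : Prop :=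
  ∀ x ∈ C, ∀ y : W, clusterRelPt M.R C y → rType M ρ x = rType M ρ y → y ∈ C

/-- β is a ρ-bisimulation between M1 and M2: conditions (atom) and (move). -/
def IsBisim {W1 W2 : Type} (ρ : Finset ℕ) (M1 : KModel W1) (M2 : KModel W2)
    (β : W1 → W2 → Prop) : Prop :=
  ∀ x1 x2, β x1 x2 →
    (∀ n ∈ ρ, M1.val n x1 ↔ M2.val n x2) ∧
    (∀ y1, M1.R x1 y1 → ∃ y2, M2.R x2 y2 ∧ β y1 y2) ∧
    (∀ y2, M2.R x2 y2 → ∃ y1, M1.R x1 y1 ∧ β y1 y2)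

/-- M1,x1 ∼ρ M2,x2 : some ρ-bisimulation relates x1 to x2. -/
def Bisimilar {W1 W2 : Type} (ρ : Finset ℕ) (M1 : KModel W1) (x1 : W1)
    (M2 : KModel W2) (x2 : W2) : Prop :=
  ∃ β : W1 → W2 → Prop, IsBisim ρ M1 M2 β ∧ β x1 x2

/-- Truth at every point of every model based on a difference frame (W, ≠). -/
def DiffValid (φ : MF) : Prop :=
  ∀ (W : Type) (val : ℕ → W → Prop) (x : W),
    Sat ⟨fun a b : W => a ≠ b, val⟩ x φ


/-! Variable-free formulas cannot tell apart points of difference frames with at least two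
points: the total relation is a bisimulation for the empty signature. The two-point frame
with `p` true at one point satisfies `φ` there, while the three-point frame with `s` at
point `0` and `q` at point `1` refutes `ψ` at `0`, so no variable-free `ι` can sit between
them. -/

theorem sat_imp {W : Type} (M : KModel W) (x : W) (a b : MF) :
    Sat M x (MF.imp a b) ↔ (Sat M x a → Sat M x b) := by
  simp only [MF.imp, MF.or, Sat]
  tauto

theorem IsBisim.sat_iff {W1 W2 : Type} {ρ : Finset ℕ} {M1 : KModel W1} {M2 : KModel W2}
    {β : W1 → W2 → Prop} (hβ : IsBisim ρ M1 M2 β) :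
    ∀ φ : MF, φ.sig ⊆ ρ → ∀ {x1 x2}, β x1 x2 → (Sat M1 x1 φ ↔ Sat M2 x2 φ)
  | .var n, hφ, _, _, hx => (hβ _ _ hx).1 n (Finset.singleton_subset_iff.mp hφ)
  | .top, _, _, _, _ => Iff.rfl
  | .bot, _, _, _, _ => Iff.rfl
  | .neg a, hφ, _, _, hx => not_congr (hβ.sat_iff a hφ hx)
  | .and a b, hφ, _, _, hx => by
    obtain ⟨ha, hb⟩ := Finset.union_subset_iff.mp hφ
    exact and_congr (hβ.sat_iff a ha hx) (hβ.sat_iff b hb hx)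
  | .dia a, hφ, x1, x2, hx => by
    obtain ⟨-, forth, back⟩ := hβ x1 x2 hx
    constructor
    · rintro ⟨y1, hxy, hy⟩
      obtain ⟨y2, hxy', hβy⟩ := forth y1 hxy
      exact ⟨y2, hxy', (hβ.sat_iff a hφ hβy).mp hy⟩
    · rintro ⟨y2, hxy, hy⟩
      obtain ⟨y1, hxy', hβy⟩ := back y2 hxy
      exact ⟨y1, hxy', (hβ.sat_iff a hφ hβy).mpr hy⟩

abbrev diffModel (W : Type) (val : ℕ → W → Prop) : KModel W :=
  ⟨fun a b : W => a ≠ b, val⟩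

theorem DiffValid.mp {a b : MF} (h : DiffValid (MF.imp a b)) {W : Type}
    {val : ℕ → W → Prop} {x : W} (ha : Sat (diffModel W val) x a) :
    Sat (diffModel W val) x b :=
  (sat_imp _ x a b).mp (h W val x) ha

theorem isBisim_diffModel_of_nontrivial {W1 W2 : Type} [Nontrivial W1] [Nontrivial W2]
    (val1 : ℕ → W1 → Prop) (val2 : ℕ → W2 → Prop) :
    IsBisim ∅ (diffModel W1 val1) (diffModel W2 val2) fun _ _ => True :=
  fun _ x2 _ => ⟨fun _ h => absurd h (Finset.notMem_empty _),
    fun _ _ => (exists_ne x2).imp fun _ h => ⟨h.symm, trivial⟩,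
    fun _ _ => (exists_ne _).imp fun _ h => ⟨h.symm, trivial⟩⟩

theorem sat_diffModel_iff_of_sig_eq_empty {W1 W2 : Type} [Nontrivial W1] [Nontrivial W2]
    {ι : MF} (hι : ι.sig = ∅) (val1 : ℕ → W1 → Prop) (val2 : ℕ → W2 → Prop)
    (x1 : W1) (x2 : W2) : Sat (diffModel W1 val1) x1 ι ↔ Sat (diffModel W2 val2) x2 ι :=
  (isBisim_diffModel_of_nontrivial val1 val2).sat_iff ι hι.subset trivial

theorem stmt7_general (p q s : ℕ) (hqs : q ≠ s) :
    let φ := MF.and (MF.dia (MF.dia (MF.var p)))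
      (MF.and (MF.neg (MF.dia (MF.var p)))
        (MF.neg (MF.dia (MF.dia (MF.dia (MF.var p))))))
    let ψ := MF.imp
      (MF.and (MF.dia (MF.dia (MF.var s))) (MF.neg (MF.dia (MF.var s))))
      (MF.neg (MF.and
        (MF.dia (MF.and (MF.var q) (MF.dia (MF.var s))))
        (MF.dia (MF.and (MF.neg (MF.var q)) (MF.dia (MF.var s))))))
    ¬ ∃ ι : MF, ι.sig = ∅ ∧ DiffValid (MF.imp φ ι) ∧ DiffValid (MF.imp ι ψ) := by
  rintro φ ψ ⟨ι, hι, hφι, hιψ⟩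
  let val2 : ℕ → Fin 2 → Prop := fun n x => n = p ∧ x = 0
  let val3 : ℕ → Fin 3 → Prop := fun n x => (n = s ∧ x = 0) ∨ (n = q ∧ x = 1)
  have hφ : Sat (diffModel (Fin 2) val2) 0 φ := by
    simp only [φ, val2, Sat, true_and]
    decide
  have hψ : ¬ Sat (diffModel (Fin 3) val3) 0 ψ := by
    simp only [ψ, val3, MF.imp, MF.or, Sat, true_and, hqs, hqs.symm, false_and, or_false]
    decide
  exact hψ (hιψ.mp ((sat_diffModel_iff_of_sig_eq_empty hι val2 val3 0 0).mp (hφι.mp hφ)))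

/-- For φ = ◇◇p ∧ ¬◇p ∧ ¬◇◇◇p and
ψ = (◇◇s ∧ ¬◇s) → ¬(◇(q ∧ ◇s) ∧ ◇(¬q ∧ ◇s)), there is no variable-free ι
with both φ → ι and ι → ψ true at every point of every model based on a
difference frame. -/
theorem stmt7 (p q s : ℕ) (hpq : p ≠ q) (hps : p ≠ s) (hqs : q ≠ s) :
    let φ := MF.and (MF.dia (MF.dia (MF.var p)))
      (MF.and (MF.neg (MF.dia (MF.var p)))
        (MF.neg (MF.dia (MF.dia (MF.dia (MF.var p))))))
    let ψ := MF.imp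
      (MF.and (MF.dia (MF.dia (MF.var s))) (MF.neg (MF.dia (MF.var s))))
      (MF.neg (MF.and
        (MF.dia (MF.and (MF.var q) (MF.dia (MF.var s))))
        (MF.dia (MF.and (MF.neg (MF.var q)) (MF.dia (MF.var s))))))
    ¬ ∃ ι : MF, ι.sig = ∅ ∧ DiffValid (MF.imp φ ι) ∧ DiffValid (MF.imp ι ψ) :=
  stmt7_general p q s hqs
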